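/- Let g : ℝ³ × ℝ → ℝ be continuous and let θ > 1 be a real number (in the paper θ = qm/(q-1)). Suppose g(x,0) = 0 for all x, lim_{s→0} g(x,s)/(|s|^{θ-2} s) = 0 uniformly in x, and for each x the function s ↦ g(x,s)/|s|^{θ-1} is nondecreasing on ℝ \ {0}. Then for all (x,s) ∈ ℝ³ × ℝ, with G(x,s) = ∫₀ˢ g(x,t) dt, one has (1/θ) g(x,s) s ≥ G(x,s) ≥ 0. -/

import Mathlib

open MeasureTheory

/-!
On `(0, ∞)` write `g(s) = h(s) s^(θ-1)` with `h` nondecreasing and `h(0+) = 0`. Then `h ≥ 0`, so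
`g ≥ 0` there, and `g(t) ≤ h(s) t^(θ-1)` for `0 < t ≤ s`; integrating gives
`G(s) ≤ h(s) s^θ / θ = g(s) s / θ`. The case `s < 0` is the case `s > 0` for the reflected
function `t ↦ -g(-t)`, which satisfies the same hypotheses and has the same primitive.
-/

open Set Filter Topology

lemma MonotoneOn.le_of_tendsto_nhdsGT {h : ℝ → ℝ} {a b t : ℝ} (hmono : MonotoneOn h (Ioi a))
    (hlim : Tendsto h (𝓝[>] a) (𝓝 b)) (ht : a < t) : b ≤ h t := by
  refine le_of_tendsto hlim ?_
  filter_upwards [Ioo_mem_nhdsGT ht] with u hu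
  exact hmono hu.1 ht hu.2.le

section

variable {f : ℝ → ℝ} {θ s : ℝ}

lemma nonneg_of_monotoneOn_div_rpow
    (hmono : MonotoneOn (fun t => f t / t ^ (θ - 1)) (Ioi 0))
    (hlim : Tendsto (fun t => f t / t ^ (θ - 1)) (𝓝[>] 0) (𝓝 0)) {t : ℝ} (ht : 0 < t) :
    0 ≤ f t :=
  (div_nonneg_iff.mp (hmono.le_of_tendsto_nhdsGT hlim ht)).elim (·.1)
    fun h => absurd h.2 (Real.rpow_pos_of_pos ht _).not_ge

lemma integral_le_of_monotoneOn_div_rpow (hθ : 0 < θ) (hs : 0 < s)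
    (hf : IntervalIntegrable f volume 0 s)
    (hmono : MonotoneOn (fun t => f t / t ^ (θ - 1)) (Ioi 0)) :
    ∫ t in (0:ℝ)..s, f t ≤ 1 / θ * (f s * s) := by
  have hle : ∀ t ∈ Ioo 0 s, f t ≤ f s / s ^ (θ - 1) * t ^ (θ - 1) := fun t ht =>
    (div_le_iff₀ (Real.rpow_pos_of_pos ht.1 _)).mp (hmono ht.1 hs ht.2.le)
  have hint : IntervalIntegrable (fun t => f s / s ^ (θ - 1) * t ^ (θ - 1)) volume 0 s :=
    (intervalIntegral.intervalIntegrable_rpow' (by linarith)).const_mul _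
  calc ∫ t in (0:ℝ)..s, f t
      ≤ ∫ t in (0:ℝ)..s, f s / s ^ (θ - 1) * t ^ (θ - 1) :=
        intervalIntegral.integral_mono_on_of_le_Ioo hs.le hf hint hle
    _ = f s / s ^ (θ - 1) * (s ^ θ / θ) := by
        rw [intervalIntegral.integral_const_mul, integral_rpow (Or.inl (by linarith)),
          sub_add_cancel, Real.zero_rpow hθ.ne', sub_zero]
    _ = 1 / θ * (f s * s) := by
        rw [Real.rpow_sub_one hs.ne']
        field_simp

lemma integral_nonneg_of_monotoneOn_div_rpow (hs : 0 < s)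
    (hf : IntervalIntegrable f volume 0 s)
    (hmono : MonotoneOn (fun t => f t / t ^ (θ - 1)) (Ioi 0))
    (hlim : Tendsto (fun t => f t / t ^ (θ - 1)) (𝓝[>] 0) (𝓝 0)) :
    0 ≤ ∫ t in (0:ℝ)..s, f t := by
  have := intervalIntegral.integral_mono_on_of_le_Ioo hs.le intervalIntegrable_const hf
    fun t ht => nonneg_of_monotoneOn_div_rpow hmono hlim ht.1
  simpa using this

lemma monotoneOn_div_rpow_of_abs
    (hmono : ∀ s t : ℝ, s ≠ 0 → t ≠ 0 → s ≤ t → f s / |s| ^ (θ - 1) ≤ f t / |t| ^ (θ - 1)) :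
    MonotoneOn (fun t => f t / t ^ (θ - 1)) (Ioi 0) := by
  intro s hs t ht hst
  simpa only [abs_of_pos (show (0:ℝ) < s from hs), abs_of_pos (show (0:ℝ) < t from ht)]
    using hmono s t (ne_of_gt hs) (ne_of_gt ht) hst

lemma tendsto_div_rpow_of_abs
    (hlim : ∀ ε > 0, ∃ δ > 0, ∀ s, s ≠ 0 → |s| < δ → |f s| ≤ ε * |s| ^ (θ - 1)) :
    Tendsto (fun t => f t / t ^ (θ - 1)) (𝓝[>] 0) (𝓝 0) := by
  rw [Metric.tendsto_nhdsWithin_nhds]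
  intro ε hε
  obtain ⟨δ, hδ, hbound⟩ := hlim (ε / 2) (half_pos hε)
  refine ⟨δ, hδ, fun {t} (ht : 0 < t) htδ => ?_⟩
  rw [Real.dist_eq, sub_zero] at htδ ⊢
  have htpow := Real.rpow_pos_of_pos ht (θ - 1)
  have := hbound t ht.ne' htδ
  rw [abs_of_pos ht] at this
  rw [abs_div, abs_of_pos htpow, div_lt_iff₀ htpow]
  nlinarith

lemma reflect_monotone_div_abs_rpow
    (hmono : ∀ s t : ℝ, s ≠ 0 → t ≠ 0 → s ≤ t → f s / |s| ^ (θ - 1) ≤ f t / |t| ^ (θ - 1)) :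
    ∀ s t : ℝ, s ≠ 0 → t ≠ 0 → s ≤ t →
      -f (-s) / |s| ^ (θ - 1) ≤ -f (-t) / |t| ^ (θ - 1) := by
  intro s t hs ht hst
  have := hmono (-t) (-s) (neg_ne_zero.mpr ht) (neg_ne_zero.mpr hs) (neg_le_neg hst)
  rw [abs_neg, abs_neg] at this
  rw [neg_div, neg_div]
  exact neg_le_neg this

lemma reflect_abs_le_mul_abs_rpow
    (hlim : ∀ ε > 0, ∃ δ > 0, ∀ s, s ≠ 0 → |s| < δ → |f s| ≤ ε * |s| ^ (θ - 1)) :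
    ∀ ε > 0, ∃ δ > 0, ∀ s, s ≠ 0 → |s| < δ → |-f (-s)| ≤ ε * |s| ^ (θ - 1) := by
  intro ε hε
  obtain ⟨δ, hδ, hbound⟩ := hlim ε hε
  refine ⟨δ, hδ, fun s hs hsδ => ?_⟩
  simpa only [abs_neg] using hbound (-s) (neg_ne_zero.mpr hs) (by rwa [abs_neg])

lemma integral_eq_integral_reflect (s : ℝ) : ∫ t in (0:ℝ)..s, f t = ∫ t in (0:ℝ)..-s, -f (-t) := by
  rw [intervalIntegral.integral_neg, intervalIntegral.integral_comp_neg, neg_zero, neg_neg,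
    intervalIntegral.integral_symm]

lemma integral_le_and_nonneg_of_pos (hθ : 0 < θ) (hs : 0 < s) (hf : Continuous f)
    (hlim : ∀ ε > 0, ∃ δ > 0, ∀ s, s ≠ 0 → |s| < δ → |f s| ≤ ε * |s| ^ (θ - 1))
    (hmono : ∀ s t : ℝ, s ≠ 0 → t ≠ 0 → s ≤ t → f s / |s| ^ (θ - 1) ≤ f t / |t| ^ (θ - 1)) :
    (∫ t in (0:ℝ)..s, f t) ≤ 1 / θ * (f s * s) ∧ 0 ≤ ∫ t in (0:ℝ)..s, f t :=
  ⟨integral_le_of_monotoneOn_div_rpow hθ hs (hf.intervalIntegrable _ _)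
      (monotoneOn_div_rpow_of_abs hmono),
    integral_nonneg_of_monotoneOn_div_rpow hs (hf.intervalIntegrable _ _)
      (monotoneOn_div_rpow_of_abs hmono) (tendsto_div_rpow_of_abs hlim)⟩

end

theorem stmt3_general (θ : ℝ) (hθ : 1 < θ)
    (g : EuclideanSpace ℝ (Fin 3) → ℝ → ℝ)
    (hg_cont : Continuous fun z : EuclideanSpace ℝ (Fin 3) × ℝ => g z.1 z.2)
    (hg_lim : ∀ ε > 0, ∃ δ > 0, ∀ x s, s ≠ 0 → |s| < δ →
      |g x s| ≤ ε * |s| ^ (θ - 1))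
    (hg_mono : ∀ x, ∀ s t : ℝ, s ≠ 0 → t ≠ 0 → s ≤ t →
      g x s / |s| ^ (θ - 1) ≤ g x t / |t| ^ (θ - 1)) :
    ∀ x s, (∫ t in (0:ℝ)..s, g x t) ≤ (1 / θ) * (g x s * s) ∧
      0 ≤ ∫ t in (0:ℝ)..s, g x t := by
  intro x s
  have hθ0 : 0 < θ := by linarith
  have hcont : Continuous (g x) := hg_cont.comp (Continuous.prodMk_right x)
  have hlim : ∀ ε > 0, ∃ δ > 0, ∀ s, s ≠ 0 → |s| < δ → |g x s| ≤ ε * |s| ^ (θ - 1) :=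
    fun ε hε => (hg_lim ε hε).imp fun _ ⟨hδ, h⟩ => ⟨hδ, h x⟩
  rcases lt_trichotomy 0 s with hs | rfl | hs
  · exact integral_le_and_nonneg_of_pos hθ0 hs hcont hlim (hg_mono x)
  · simp
  · have := integral_le_and_nonneg_of_pos (f := fun t => -g x (-t)) hθ0 (neg_pos.mpr hs)
      (hcont.comp continuous_neg).neg (reflect_abs_le_mul_abs_rpow hlim)
      (reflect_monotone_div_abs_rpow (hg_mono x))
    rw [← integral_eq_integral_reflect, neg_neg, neg_mul_neg] at this
    exact this

theorem stmt3 (θ : ℝ) (hθ : 1 < θ)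
    (g : EuclideanSpace ℝ (Fin 3) → ℝ → ℝ)
    (hg_cont : Continuous fun z : EuclideanSpace ℝ (Fin 3) × ℝ => g z.1 z.2)
    (hg0 : ∀ x, g x 0 = 0)
    (hg_lim : ∀ ε > 0, ∃ δ > 0, ∀ x s, s ≠ 0 → |s| < δ →
      |g x s| ≤ ε * |s| ^ (θ - 1))
    (hg_mono : ∀ x, ∀ s t : ℝ, s ≠ 0 → t ≠ 0 → s ≤ t →
      g x s / |s| ^ (θ - 1) ≤ g x t / |t| ^ (θ - 1)) :
    ∀ x s, (∫ t in (0:ℝ)..s, g x t) ≤ (1 / θ) * (g x s * s) ∧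
      0 ≤ ∫ t in (0:ℝ)..s, g x t :=
  stmt3_general θ hθ g hg_cont hg_lim hg_mono
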